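/- arXiv:1806.05253 — 7 statements merged into one kernel-verified Lean document; each statement's English description precedes it below -/
import Mathlib

section
/- Let K ⊆ ℝ^d be a closed cone and A a linear map with AK ⊆ K. If (I + A)^{d−1} maps K∖{0} into the interior of K, then ∑_{k=0}^{d−1} A^k also maps K∖{0} into the interior of K. -/
/-!
Write `S = ∑_{k<d} A^k` and `n = d - 1`. Since `(1 + A)^n = ∑_{k≤n} C(n,k) A^k` and
`C(n,k) ≤ 2^n`, the vector `(2^n + 1) S x` is `(1 + A)^n x` plus a positive combination of the
`A^k x ∈ K`. An interior point of a convex cone plus a point of the cone is again interior, so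
`(2^n + 1) S x`, and hence `S x`, lies in the interior of `K`.
-/

open scoped Pointwise
open Finset

lemma Module.End.one_add_pow_apply {R M : Type*} [CommSemiring R] [AddCommMonoid M] [Module R M]
    (f : Module.End R M) (n : ℕ) (x : M) :
    ((1 + f) ^ n) x = ∑ k ∈ range (n + 1), n.choose k • (f ^ k) x := by
  rw [add_comm, (Commute.one_right f).add_pow, LinearMap.sum_apply]
  simp [Module.End.mul_apply]

namespace ConvexCone

section Interior

variable {𝕜 E : Type*} [Semiring 𝕜] [PartialOrder 𝕜] [AddCommGroup E] [SMul 𝕜 E]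
  [TopologicalSpace E] [IsTopologicalAddGroup E] (C : ConvexCone 𝕜 E) {u v : E}

lemma add_mem_interior (hu : u ∈ interior C) (hv : v ∈ C) : u + v ∈ interior C :=
  interior_maximal (by rintro _ ⟨w, hw, rfl⟩; exact C.add_mem (interior_subset hw) hv)
    (isOpenMap_add_right v _ isOpen_interior) ⟨u, hu, rfl⟩

lemma add_sum_mem_interior {ι : Type*} (s : Finset ι) {f : ι → E} (hu : u ∈ interior C)
    (hf : ∀ i ∈ s, f i ∈ C) : u + ∑ i ∈ s, f i ∈ interior C := by
  induction s using Finset.cons_induction with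
  | empty => simpa using hu
  | cons a s _ ih =>
    rw [sum_cons, add_left_comm, add_comm]
    exact C.add_mem_interior (ih fun i hi ↦ hf i (mem_cons_of_mem hi))
      (hf a (mem_cons_self a s))

end Interior

lemma smul_mem_interior {𝕜 E : Type*} [Semifield 𝕜] [PartialOrder 𝕜] [AddCommMonoid E]
    [Module 𝕜 E] [TopologicalSpace E] [ContinuousConstSMul 𝕜 E] (C : ConvexCone 𝕜 E) {c : 𝕜}
    (hc : 0 < c) {u : E} (hu : u ∈ interior C) : c • u ∈ interior C :=
  interior_maximal (by rintro _ ⟨w, hw, rfl⟩; exact C.smul_mem hc (interior_subset hw))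
    (isOpenMap_smul₀ hc.ne' _ isOpen_interior) ⟨u, hu, rfl⟩

variable {𝕜 E : Type*} [Field 𝕜] [LinearOrder 𝕜] [IsStrictOrderedRing 𝕜] [AddCommGroup E]
  [Module 𝕜 E]

lemma coe_hull_eq_self {s : Set E} (hs : Convex 𝕜 s) (hsmul : ∀ c : 𝕜, 0 < c → c • s = s) :
    (hull 𝕜 s : Set E) = s := by
  rw [coe_hull_of_convex hs]
  ext x
  exact ⟨fun ⟨r, hr, hx⟩ ↦ hsmul r hr ▸ hx, fun hx ↦ ⟨1, one_pos, by rwa [one_smul]⟩⟩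

variable [TopologicalSpace E] (C : ConvexCone 𝕜 E)

theorem sum_pow_apply_mem_interior [IsTopologicalAddGroup E] [ContinuousConstSMul 𝕜 E]
    {A : E →ₗ[𝕜] E} (hA : Set.MapsTo A C C) {x : E} (hx : x ∈ C) {n : ℕ}
    (hpos : ((1 + A) ^ n) x ∈ interior C) :
    (∑ k ∈ range (n + 1), A ^ k) x ∈ interior C := by
  set c : 𝕜 := 2 ^ n + 1
  have hc : 0 < c := by positivity
  have hsplit : c • (∑ k ∈ range (n + 1), A ^ k) x
      = ((1 + A) ^ n) x + ∑ k ∈ range (n + 1), (c - n.choose k) • (A ^ k) x := by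
    rw [Module.End.one_add_pow_apply, ← sum_add_distrib, LinearMap.sum_apply, smul_sum]
    refine sum_congr rfl fun k _ ↦ ?_
    rw [← Nat.cast_smul_eq_nsmul 𝕜, ← add_smul, add_sub_cancel]
  have hterms : ∀ k ∈ range (n + 1), (c - n.choose k) • (A ^ k) x ∈ C := by
    intro k _
    have hchoose : (n.choose k : 𝕜) ≤ 2 ^ n := by exact_mod_cast Nat.choose_le_two_pow n k
    refine C.smul_mem (by linarith) ?_
    rw [Module.End.coe_pow]
    exact hA.iterate k hx
  have hmem := C.smul_mem_interior (inv_pos.2 hc) (hsplit ▸ C.add_sum_mem_interior _ hpos hterms)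
  rwa [inv_smul_smul₀ hc.ne'] at hmem

end ConvexCone

theorem irreducible_sum_powers_positive_general (d : ℕ) (K : Set (EuclideanSpace ℝ (Fin d)))
    (hsmul : ∀ l : ℝ, 0 < l → l • K = K)
    (hconv : Convex ℝ K)
    (A : EuclideanSpace ℝ (Fin d) →ₗ[ℝ] EuclideanSpace ℝ (Fin d))
    (hA : ∀ x ∈ K, A x ∈ K)
    (hpos : ∀ x ∈ K, x ≠ 0 → ((1 + A) ^ (d - 1)) x ∈ interior K) :
    ∀ x ∈ K, x ≠ 0 → (∑ k ∈ Finset.range d, A ^ k) x ∈ interior K := by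
  intro x hx hx0
  obtain ⟨n, rfl⟩ : ∃ n, d = n + 1 :=
    Nat.exists_eq_succ_of_ne_zero (by rintro rfl; exact hx0 (Subsingleton.elim x 0))
  have hK : (ConvexCone.hull ℝ K : Set _) = K := ConvexCone.coe_hull_eq_self hconv hsmul
  have hxn := hpos x hx hx0
  rw [Nat.add_sub_cancel] at hxn
  rw [← hK] at hA hx hxn ⊢
  exact ConvexCone.sum_pow_apply_mem_interior _ hA hx hxn

theorem irreducible_sum_powers_positive (d : ℕ) (K : Set (EuclideanSpace ℝ (Fin d)))
    (hclosed : IsClosed K)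
    (hpointed : K ∩ (-K) = {0})
    (hsmul : ∀ l : ℝ, 0 < l → l • K = K)
    (hconv : Convex ℝ K)
    (A : EuclideanSpace ℝ (Fin d) →ₗ[ℝ] EuclideanSpace ℝ (Fin d))
    (hA : ∀ x ∈ K, A x ∈ K)
    (hpos : ∀ x ∈ K, x ≠ 0 → ((1 + A) ^ (d - 1)) x ∈ interior K) :
    ∀ x ∈ K, x ≠ 0 → (∑ k ∈ Finset.range d, A ^ k) x ∈ interior K :=
  irreducible_sum_powers_positive_general d K hsmul hconv A hA hpos
end

section
/- Let K ⊆ ℝ^d be a closed cone with nonempty interior, and let D ⊂ int(K) and D* ⊂ int(K*) be nonempty compact sets. Then there exists C > 0 such that C^{-1}‖A‖ ≤ ⟨Au, v⟩ ≤ C‖A‖ for all u ∈ D, v ∈ D*, and all linear maps A with AK ⊆ K. -/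
/-!
If `closedBall u r ⊆ K` and `closedBall v δ` lies in the dual cone `K*`, then every `y ∈ K`
satisfies `δ ‖y‖ ≤ ⟪y, v⟫`, and for `‖x‖ ≤ r` both `u ± x` lie in `K`. Applying the first bound to
`A (u ± x) ∈ K` and adding gives `δ ‖A x‖ ≤ ⟪A u, v⟫`, i.e. `r δ ‖A‖ ≤ ⟪A u, v⟫`. Compactness of
`D` and `D*` makes `r` and `δ` uniform; the upper bound is Cauchy–Schwarz.
-/

open Set Metric
open scoped RealInnerProductSpace Pointwise

theorem IsCompact.exists_pos_forall_closedBall_subset {X : Type*} [PseudoMetricSpace X]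
    {s t : Set X} (hs : IsCompact s) (hst : s ⊆ interior t) :
    ∃ r > 0, ∀ x ∈ s, closedBall x r ⊆ t := by
  obtain ⟨r, hr, hsub⟩ := hs.exists_cthickening_subset_open isOpen_interior hst
  exact ⟨r, hr, fun x hx ↦
    (closedBall_subset_cthickening hx r).trans (hsub.trans interior_subset)⟩

section InnerProduct

variable {E F : Type*} [NormedAddCommGroup E] [NormedSpace ℝ E]
  [NormedAddCommGroup F] [InnerProductSpace ℝ F]

theorem mul_norm_le_inner_of_forall_mem_closedBall {y v : F} {δ : ℝ} (hδ : 0 ≤ δ)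
    (hv : ∀ w ∈ closedBall v δ, 0 ≤ ⟪y, w⟫) : δ * ‖y‖ ≤ ⟪y, v⟫ := by
  rcases eq_or_ne y 0 with rfl | hy
  · simp
  have hy' : 0 < ‖y‖ := norm_pos_iff.mpr hy
  have hw : v - (δ / ‖y‖) • y ∈ closedBall v δ := by
    rw [mem_closedBall, dist_eq_norm, sub_sub_cancel_left, norm_neg, norm_smul,
      Real.norm_of_nonneg (by positivity), div_mul_cancel₀ _ hy'.ne']
  have := hv _ hw
  rw [inner_sub_right, real_inner_smul_right, real_inner_self_eq_norm_mul_norm,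
    ← mul_assoc, div_mul_cancel₀ _ hy'.ne'] at this
  linarith

theorem mul_mul_opNorm_le_inner_apply {K : Set E} {L : Set F} {A : E →L[ℝ] F}
    (hA : MapsTo A K L) {u : E} {r : ℝ} (hr : 0 ≤ r) (hu : closedBall u r ⊆ K)
    {v : F} {δ : ℝ} (hδ : 0 ≤ δ) (hv : ∀ y ∈ L, δ * ‖y‖ ≤ ⟪y, v⟫) :
    r * δ * ‖A‖ ≤ ⟪A u, v⟫ := by
  have hAu : 0 ≤ ⟪A u, v⟫ :=
    (mul_nonneg hδ (norm_nonneg _)).trans (hv _ (hA (hu (mem_closedBall_self hr))))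
  have hball : ∀ x : E, ‖x‖ ≤ r → δ * ‖A x‖ ≤ ⟪A u, v⟫ := by
    intro x hx
    have hplus := hv _ (hA (hu (a := u + x) (by simpa [dist_eq_norm] using hx)))
    have hminus := hv _ (hA (hu (a := u - x) (by simpa [dist_eq_norm] using hx)))
    have hsum : ⟪A (u + x), v⟫ + ⟪A (u - x), v⟫ = 2 * ⟪A u, v⟫ := by
      rw [map_add, map_sub, inner_add_left, inner_sub_left]
      ring
    have htriangle : 2 * ‖A x‖ ≤ ‖A (u + x)‖ + ‖A (u - x)‖ := by
      have hdiff : A (u + x) - A (u - x) = (2 : ℝ) • A x := by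
        rw [map_add, map_sub]
        module
      have := norm_sub_le (A (u + x)) (A (u - x))
      rwa [hdiff, norm_smul, Real.norm_two] at this
    linarith [mul_le_mul_of_nonneg_left htriangle hδ]
  have hscaled : ‖(r * δ) • A‖ ≤ ⟪A u, v⟫ :=
    ContinuousLinearMap.opNorm_le_of_unit_norm hAu fun x hx ↦ by
      have := hball (r • x) (by rw [norm_smul, hx, Real.norm_of_nonneg hr, mul_one])
      rw [map_smul, norm_smul, Real.norm_of_nonneg hr] at this
      rw [smul_apply, norm_smul, Real.norm_of_nonneg (by positivity)]
      linarith
  rwa [norm_smul, Real.norm_of_nonneg (by positivity)] at hscaled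

end InnerProduct

theorem approx_norm_lemma_general (d : ℕ) (K : Set (EuclideanSpace ℝ (Fin d)))
    (D Dstar : Set (EuclideanSpace ℝ (Fin d)))
    (hD : D ⊆ interior K)
    (hDstar : Dstar ⊆ interior {w | ∀ x ∈ K, 0 ≤ ⟪x, w⟫})
    (hDcpt : IsCompact D) (hDstarcpt : IsCompact Dstar) :
    ∃ C > (0 : ℝ), ∀ u ∈ D, ∀ v ∈ Dstar,
      ∀ A : EuclideanSpace ℝ (Fin d) →L[ℝ] EuclideanSpace ℝ (Fin d),
        (∀ x ∈ K, A x ∈ K) →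
          C⁻¹ * ‖A‖ ≤ ⟪A u, v⟫ ∧ ⟪A u, v⟫ ≤ C * ‖A‖ := by
  obtain ⟨r, hr, hDball⟩ := hDcpt.exists_pos_forall_closedBall_subset hD
  obtain ⟨δ, hδ, hDstarball⟩ := hDstarcpt.exists_pos_forall_closedBall_subset hDstar
  obtain ⟨M, hM, hDbound⟩ := hDcpt.isBounded.exists_pos_norm_le
  obtain ⟨N, hN, hDstarbound⟩ := hDstarcpt.isBounded.exists_pos_norm_le
  refine ⟨max (M * N) (r * δ)⁻¹, by positivity, fun u hu v hv A hA ↦ ⟨?_, ?_⟩⟩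
  · have hdual : ∀ y ∈ K, δ * ‖y‖ ≤ ⟪y, v⟫ := fun y hy ↦
      mul_norm_le_inner_of_forall_mem_closedBall hδ.le fun w hw ↦ hDstarball v hv hw y hy
    calc (max (M * N) (r * δ)⁻¹)⁻¹ * ‖A‖ ≤ r * δ * ‖A‖ := by
          gcongr
          exact inv_le_of_inv_le₀ (by positivity) (le_max_right _ _)
      _ ≤ ⟪A u, v⟫ := mul_mul_opNorm_le_inner_apply hA hr.le (hDball u hu) hδ.le hdual
  · calc ⟪A u, v⟫ ≤ ‖A‖ * ‖u‖ * ‖v‖ :=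
          (real_inner_le_norm _ _).trans (by gcongr; exact A.le_opNorm u)
      _ ≤ ‖A‖ * M * N := by gcongr; exacts [hDbound u hu, hDstarbound v hv]
      _ ≤ max (M * N) (r * δ)⁻¹ * ‖A‖ := by
          rw [mul_assoc, mul_comm]
          gcongr
          exact le_max_left _ _

theorem approx_norm_lemma (d : ℕ) (K : Set (EuclideanSpace ℝ (Fin d)))
    (hclosed : IsClosed K)
    (hpointed : K ∩ (-K) = {0})
    (hsmul : ∀ l : ℝ, 0 < l → l • K = K)
    (hconv : Convex ℝ K)
    (hint : (interior K).Nonempty)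
    (D Dstar : Set (EuclideanSpace ℝ (Fin d)))
    (hD : D ⊆ interior K)
    (hDstar : Dstar ⊆ interior {w | ∀ x ∈ K, 0 ≤ ⟪x, w⟫})
    (hDne : D.Nonempty) (hDstarne : Dstar.Nonempty)
    (hDcpt : IsCompact D) (hDstarcpt : IsCompact Dstar) :
    ∃ C > (0 : ℝ), ∀ u ∈ D, ∀ v ∈ Dstar,
      ∀ A : EuclideanSpace ℝ (Fin d) →L[ℝ] EuclideanSpace ℝ (Fin d),
        (∀ x ∈ K, A x ∈ K) →
          C⁻¹ * ‖A‖ ≤ ⟪A u, v⟫ ∧ ⟪A u, v⟫ ≤ C * ‖A‖ :=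
  approx_norm_lemma_general d K D Dstar hD hDstar hDcpt hDstarcpt
end

section
/- Let A be a K-nonnegative linear map on ℝ^d for a closed cone K with nonempty interior. If ⟨Au, v⟩ = 0 for some u ∈ int(K) and v ∈ int(K*), then A = 0. -/
/-!
Moving `v` slightly towards `-A u` keeps it in the dual cone, so
`0 ≤ ⟪A u, v - t • A u⟫ = -t ‖A u‖²` and hence `A u = 0`. Then, for any `y` and small `t ≠ 0`,
both `u + t • y` and `u - t • y` lie in `K`, so `± t • A y ∈ K ∩ -K = {0}`.
-/

open scoped RealInnerProductSpace Pointwise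
open Filter Topology

theorem eventually_add_smul_mem_of_mem_interior {E : Type*} [AddCommGroup E] [Module ℝ E]
    [TopologicalSpace E] [ContinuousAdd E] [ContinuousSMul ℝ E] {s : Set E} {u : E}
    (hu : u ∈ interior s) (y : E) : ∀ᶠ t : ℝ in 𝓝 0, u + t • y ∈ s := by
  have hcont : Continuous fun t : ℝ ↦ u + t • y := by fun_prop
  have hlim : Tendsto (fun t : ℝ ↦ u + t • y) (𝓝 0) (𝓝 u) := by simpa using hcont.tendsto 0
  exact hlim.eventually (mem_interior_iff_mem_nhds.mp hu)

theorem eq_zero_of_inner_eq_zero_of_mem_interior_innerDual {E : Type*} [NormedAddCommGroup E]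
    [InnerProductSpace ℝ E] [CompleteSpace E] {K : Set E} {x v : E} (hx : x ∈ K)
    (hv : v ∈ interior (ProperCone.innerDual K : Set E)) (hxv : ⟪x, v⟫ = 0) : x = 0 := by
  obtain ⟨t, hmem, ht⟩ := (((eventually_add_smul_mem_of_mem_interior hv (-x)).filter_mono
    nhdsWithin_le_nhds).and self_mem_nhdsWithin).exists (f := 𝓝[>] (0 : ℝ))
  have hnonneg : 0 ≤ ⟪x, v + t • -x⟫ := hmem hx
  rw [inner_add_right, hxv, inner_smul_right, inner_neg_right, real_inner_self_eq_norm_sq]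
    at hnonneg
  have : ‖x‖ ^ 2 ≤ 0 := by nlinarith
  simpa using this

theorem LinearMap.eq_zero_of_mapsTo_of_apply_eq_zero_of_mem_interior {E : Type*}
    [AddCommGroup E] [Module ℝ E] [TopologicalSpace E] [ContinuousAdd E] [ContinuousSMul ℝ E]
    {K : Set E} (hpointed : K ∩ -K = {0}) {A : E →ₗ[ℝ] E} (hA : Set.MapsTo A K K) {u : E}
    (hu : u ∈ interior K) (hAu : A u = 0) : A = 0 := by
  ext y
  obtain ⟨t, ⟨hplus, hminus⟩, ht⟩ := (((eventually_add_smul_mem_of_mem_interior hu y).and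
    (eventually_add_smul_mem_of_mem_interior hu (-y))).filter_mono nhdsWithin_le_nhds
    |>.and self_mem_nhdsWithin).exists (f := 𝓝[≠] (0 : ℝ))
  have hpos : t • A y ∈ K := by simpa [hAu] using hA hplus
  have hneg : -(t • A y) ∈ K := by simpa [hAu] using hA hminus
  have hzero : t • A y ∈ K ∩ -K := ⟨hpos, Set.mem_neg.mpr hneg⟩
  rw [hpointed, Set.mem_singleton_iff, smul_eq_zero] at hzero
  exact hzero.resolve_left ht

theorem inner_eq_zero_interior_imp_zero_general (d : ℕ) (K : Set (EuclideanSpace ℝ (Fin d)))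
    (hpointed : K ∩ (-K) = {0})
    (A : EuclideanSpace ℝ (Fin d) →L[ℝ] EuclideanSpace ℝ (Fin d))
    (hA : ∀ x ∈ K, A x ∈ K)
    (u v : EuclideanSpace ℝ (Fin d))
    (hu : u ∈ interior K)
    (hv : v ∈ interior {w | ∀ x ∈ K, 0 ≤ ⟪x, w⟫})
    (h0 : ⟪A u, v⟫ = 0) :
    A = 0 := by
  have hAu : A u = 0 :=
    eq_zero_of_inner_eq_zero_of_mem_interior_innerDual (hA u (interior_subset hu)) hv h0
  exact ContinuousLinearMap.coe_injective <|
    LinearMap.eq_zero_of_mapsTo_of_apply_eq_zero_of_mem_interior hpointed (A := A.toLinearMap)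
      hA hu hAu

theorem inner_eq_zero_interior_imp_zero (d : ℕ) (K : Set (EuclideanSpace ℝ (Fin d)))
    (hclosed : IsClosed K)
    (hpointed : K ∩ (-K) = {0})
    (hsmul : ∀ l : ℝ, 0 < l → l • K = K)
    (hconv : Convex ℝ K)
    (hint : (interior K).Nonempty)
    (A : EuclideanSpace ℝ (Fin d) →L[ℝ] EuclideanSpace ℝ (Fin d))
    (hA : ∀ x ∈ K, A x ∈ K)
    (u v : EuclideanSpace ℝ (Fin d))
    (hu : u ∈ interior K)
    (hv : v ∈ interior {w | ∀ x ∈ K, 0 ≤ ⟪x, w⟫})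
    (h0 : ⟪A u, v⟫ = 0) :
    A = 0 :=
  inner_eq_zero_interior_imp_zero_general d K hpointed A hA u v hu hv h0
end

section
/- For any invertible d×d real matrix A and nonzero vectors u, w ∈ ℝ^d, the projective distance satisfies d(Āu, Āw) ≤ (2‖A‖ / ‖A(u/‖u‖)‖) · d(ū, w̄), where d(ū, w̄) = min(‖u/‖u‖ − w/‖w‖‖, ‖u/‖u‖ + w/‖w‖‖) is the metric on real projective space. -/
/-!
Write `x̂ = x / ‖x‖`. Since `‖x‖ (x̂ - ŷ) = (x - y) + (‖y‖ - ‖x‖) ŷ` and `|‖y‖ - ‖x‖| ≤ ‖x - y‖`,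
we get `‖x‖ ‖x̂ - ŷ‖ ≤ 2 ‖x - y‖`, and likewise with `-y` in place of `y`. The projective class of
`A u` only depends on that of `u`, so we may take `x = A û`, `y = A ŵ` and bound
`‖A û ∓ A ŵ‖ ≤ ‖A‖ ‖û ∓ ŵ‖`.
-/

open NormedSpace

/-- The metric on real projective space, expressed on nonzero representatives. -/
noncomputable def projDist {d : ℕ} (u w : EuclideanSpace ℝ (Fin d)) : ℝ :=
  min ‖‖u‖⁻¹ • u - ‖w‖⁻¹ • w‖ ‖‖u‖⁻¹ • u + ‖w‖⁻¹ • w‖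

section Normalize

variable {V W : Type*} [NormedAddCommGroup V] [NormedSpace ℝ V]
  [NormedAddCommGroup W] [NormedSpace ℝ W]

lemma norm_normalize_le_one (x : V) : ‖normalize x‖ ≤ 1 := by
  by_cases hx : x = 0
  · simp [hx]
  · exact (norm_normalize hx).le

lemma norm_mul_norm_normalize_sub_le (x y : V) :
    ‖x‖ * ‖normalize x - normalize y‖ ≤ 2 * ‖x - y‖ := by
  have hdecomp : ‖x‖ • (normalize x - normalize y) = (x - y) + (‖y‖ - ‖x‖) • normalize y := by
    rw [smul_sub, norm_smul_normalize, sub_smul, norm_smul_normalize]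
    abel
  have hscale : ‖(‖y‖ - ‖x‖) • normalize y‖ ≤ ‖x - y‖ := by
    rw [norm_smul, Real.norm_eq_abs, norm_sub_rev x y]
    exact (mul_le_of_le_one_right (abs_nonneg _) (norm_normalize_le_one y)).trans
      (abs_norm_sub_norm_le y x)
  calc ‖x‖ * ‖normalize x - normalize y‖
      = ‖(x - y) + (‖y‖ - ‖x‖) • normalize y‖ := by rw [← hdecomp, norm_smul, norm_norm]
    _ ≤ ‖x - y‖ + ‖x - y‖ := (norm_add_le _ _).trans (by gcongr)
    _ = 2 * ‖x - y‖ := by ring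

lemma norm_mul_norm_normalize_add_le (x y : V) :
    ‖x‖ * ‖normalize x + normalize y‖ ≤ 2 * ‖x + y‖ := by
  simpa using norm_mul_norm_normalize_sub_le x (-y)

lemma normalize_map_normalize {F : Type*} [FunLike F V W] [LinearMapClass F ℝ V W]
    (f : F) (v : V) : normalize (f (normalize v)) = normalize (f v) := by
  by_cases hv : v = 0
  · simp [hv]
  · rw [show normalize v = ‖v‖⁻¹ • v from rfl, map_smul, normalize_smul_of_pos (inv_pos.2 (norm_pos_iff.2 hv))]

end Normalize

section ProjDist

variable {m n : ℕ}

lemma projDist_eq_min_normalize (x y : EuclideanSpace ℝ (Fin n)) :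
    projDist x y = min ‖normalize x - normalize y‖ ‖normalize x + normalize y‖ :=
  rfl

lemma norm_mul_projDist_le (x y : EuclideanSpace ℝ (Fin n)) :
    ‖x‖ * projDist x y ≤ 2 * min ‖x - y‖ ‖x + y‖ := by
  rw [projDist_eq_min_normalize, mul_min_of_nonneg _ _ (norm_nonneg x),
    mul_min_of_nonneg _ _ zero_le_two]
  exact min_le_min (norm_mul_norm_normalize_sub_le x y) (norm_mul_norm_normalize_add_le x y)

lemma projDist_map_normalize (A : EuclideanSpace ℝ (Fin m) →L[ℝ] EuclideanSpace ℝ (Fin n))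
    (u w : EuclideanSpace ℝ (Fin m)) :
    projDist (A (normalize u)) (A (normalize w)) = projDist (A u) (A w) := by
  simp only [projDist_eq_min_normalize, normalize_map_normalize]

lemma norm_mul_projDist_map_le (A : EuclideanSpace ℝ (Fin m) →L[ℝ] EuclideanSpace ℝ (Fin n))
    (x y : EuclideanSpace ℝ (Fin m)) :
    ‖A x‖ * projDist (A x) (A y) ≤ 2 * ‖A‖ * min ‖x - y‖ ‖x + y‖ := by
  calc ‖A x‖ * projDist (A x) (A y)
      ≤ 2 * min ‖A (x - y)‖ ‖A (x + y)‖ := by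
        simpa only [map_sub, map_add] using norm_mul_projDist_le (A x) (A y)
    _ ≤ 2 * min (‖A‖ * ‖x - y‖) (‖A‖ * ‖x + y‖) := by
        gcongr <;> exact A.le_opNorm _
    _ = 2 * ‖A‖ * min ‖x - y‖ ‖x + y‖ := by
        rw [← mul_min_of_nonneg _ _ (norm_nonneg A), mul_assoc]

end ProjDist

theorem projective_contraction_general (d : ℕ)
    (A : EuclideanSpace ℝ (Fin d) →L[ℝ] EuclideanSpace ℝ (Fin d))
    (hA : Function.Bijective A)
    (u w : EuclideanSpace ℝ (Fin d)) (hu : u ≠ 0) :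
    projDist (A u) (A w) ≤ (2 * ‖A‖ / ‖A (‖u‖⁻¹ • u)‖) * projDist u w := by
  change _ ≤ 2 * ‖A‖ / ‖A (normalize u)‖ * _
  have hAu : 0 < ‖A (normalize u)‖ :=
    norm_pos_iff.2 <| (map_ne_zero_iff A hA.injective).2 <| (normalize_eq_zero_iff u).not.2 hu
  rw [← projDist_map_normalize, div_mul_eq_mul_div, le_div_iff₀' hAu]
  exact norm_mul_projDist_map_le A _ _

theorem projective_contraction (d : ℕ)
    (A : EuclideanSpace ℝ (Fin d) →L[ℝ] EuclideanSpace ℝ (Fin d))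
    (hA : Function.Bijective A)
    (u w : EuclideanSpace ℝ (Fin d)) (hu : u ≠ 0) (hw : w ≠ 0) :
    projDist (A u) (A w) ≤ (2 * ‖A‖ / ‖A (‖u‖⁻¹ • u)‖) * projDist u w :=
  projective_contraction_general d A hA u w hu
end

section
/- Let A be an invertible d×d real matrix and t ≥ 0. Then for all nonzero u, w ∈ ℝ^d: |‖A(u/‖u‖)‖^t − ‖A(w/‖w‖)‖^t| ≤ (t+1)‖A‖^t · d(ū, w̄)^{min(1,t)}, where d is the projective metric. -/
/-!
On the closed unit ball, `‖A x‖` is `‖A‖`-Lipschitz and bounded by `‖A‖`. Composing with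
`s ↦ s ^ t` on `[0, ‖A‖]`, which is `t`-Hölder with constant `1` for `t ≤ 1` (subadditivity of
`s ↦ s ^ t`) and Lipschitz with constant `t ‖A‖ ^ (t - 1)` for `t ≥ 1` (mean value theorem), gives
the estimate with `‖x - y‖`. Since `‖A (-y)‖ = ‖A y‖`, it also holds with `‖x + y‖`, hence with
the projective distance.
-/

open Set

namespace Real

theorem abs_rpow_sub_rpow_le_abs_sub_rpow {a b p : ℝ} (ha : 0 ≤ a) (hb : 0 ≤ b) (hp : 0 ≤ p)
    (hp1 : p ≤ 1) : |a ^ p - b ^ p| ≤ |a - b| ^ p := by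
  wlog hba : b ≤ a generalizing a b
  · rw [abs_sub_comm, abs_sub_comm a]
    exact this hb ha (le_of_not_ge hba)
  have hsub : (a - b + b) ^ p ≤ (a - b) ^ p + b ^ p :=
    rpow_add_le_add_rpow (sub_nonneg.2 hba) hb hp hp1
  rw [sub_add_cancel] at hsub
  rw [abs_of_nonneg (sub_nonneg.2 (rpow_le_rpow hb hba hp)), abs_of_nonneg (sub_nonneg.2 hba)]
  linarith

theorem abs_rpow_sub_rpow_le_mul_abs_sub {a b M t : ℝ} (ht : 1 ≤ t) (ha : a ∈ Icc 0 M)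
    (hb : b ∈ Icc 0 M) : |a ^ t - b ^ t| ≤ t * M ^ (t - 1) * |a - b| := by
  have hderiv_le : ∀ x ∈ Icc 0 M, ‖t * x ^ (t - 1)‖ ≤ t * M ^ (t - 1) := fun x hx => by
    rw [norm_mul, norm_of_nonneg (by linarith), norm_of_nonneg (rpow_nonneg hx.1 _)]
    exact mul_le_mul_of_nonneg_left (rpow_le_rpow hx.1 hx.2 (by linarith)) (by linarith)
  simpa [norm_eq_abs, abs_sub_comm] using
    (convex_Icc 0 M).norm_image_sub_le_of_norm_hasDerivWithin_le
      (fun x _ => (hasDerivAt_rpow_const (Or.inr ht)).hasDerivWithinAt) hderiv_le hb ha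

theorem abs_rpow_sub_rpow_le_of_abs_sub_le {a b M δ t : ℝ} (ht : 0 ≤ t) (ha : a ∈ Icc 0 M)
    (hb : b ∈ Icc 0 M) (hδ : 0 ≤ δ) (hab : |a - b| ≤ M * δ) :
    |a ^ t - b ^ t| ≤ (t + 1) * M ^ t * δ ^ min 1 t := by
  have hM : 0 ≤ M := ha.1.trans ha.2
  rcases le_total t 1 with ht1 | ht1
  · rw [min_eq_right ht1]
    calc |a ^ t - b ^ t| ≤ |a - b| ^ t := abs_rpow_sub_rpow_le_abs_sub_rpow ha.1 hb.1 ht ht1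
      _ ≤ (M * δ) ^ t := by gcongr
      _ = 1 * M ^ t * δ ^ t := by rw [mul_rpow hM hδ, one_mul]
      _ ≤ (t + 1) * M ^ t * δ ^ t := by gcongr; linarith
  · rw [min_eq_left ht1, rpow_one]
    calc |a ^ t - b ^ t| ≤ t * M ^ (t - 1) * |a - b| := abs_rpow_sub_rpow_le_mul_abs_sub ht1 ha hb
      _ ≤ t * M ^ (t - 1) * (M * δ) := by gcongr
      _ = t * M ^ t * δ := by
        rw [← sub_add_cancel t 1, rpow_add_one' hM (by linarith), add_sub_cancel_right]
        ring
      _ ≤ (t + 1) * M ^ t * δ := by gcongr; linarith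

end Real

theorem ContinuousLinearMap.abs_norm_rpow_sub_norm_rpow_le {𝕜 E F : Type*}
    [NontriviallyNormedField 𝕜] [SeminormedAddCommGroup E] [SeminormedAddCommGroup F]
    [NormedSpace 𝕜 E] [NormedSpace 𝕜 F] (A : E →L[𝕜] F) {t : ℝ} (ht : 0 ≤ t) {x y : E}
    (hx : ‖x‖ ≤ 1) (hy : ‖y‖ ≤ 1) :
    |‖A x‖ ^ t - ‖A y‖ ^ t| ≤ (t + 1) * ‖A‖ ^ t * ‖x - y‖ ^ min 1 t := by
  refine Real.abs_rpow_sub_rpow_le_of_abs_sub_le ht ⟨norm_nonneg _, A.unit_le_opNorm x hx⟩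
    ⟨norm_nonneg _, A.unit_le_opNorm y hy⟩ (norm_nonneg _) ?_
  calc |‖A x‖ - ‖A y‖| ≤ ‖A x - A y‖ := abs_norm_sub_norm_le _ _
    _ = ‖A (x - y)‖ := by rw [map_sub]
    _ ≤ ‖A‖ * ‖x - y‖ := A.le_opNorm _

theorem holder_estimate_weights_general (d : ℕ)
    (A : EuclideanSpace ℝ (Fin d) →L[ℝ] EuclideanSpace ℝ (Fin d))
    (t : ℝ) (ht : 0 ≤ t)
    (u w : EuclideanSpace ℝ (Fin d)) :
    |‖A (‖u‖⁻¹ • u)‖ ^ t - ‖A (‖w‖⁻¹ • w)‖ ^ t| ≤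
      (t + 1) * ‖A‖ ^ t * projDist u w ^ min 1 t := by
  have hu : ‖‖u‖⁻¹ • u‖ ≤ 1 := mem_closedBall_zero_iff.1 (inv_norm_smul_mem_unitClosedBall u)
  have hw : ‖-(‖w‖⁻¹ • w)‖ ≤ 1 :=
    (norm_neg _).trans_le (mem_closedBall_zero_iff.1 (inv_norm_smul_mem_unitClosedBall w))
  rcases min_choice ‖‖u‖⁻¹ • u - ‖w‖⁻¹ • w‖ ‖‖u‖⁻¹ • u + ‖w‖⁻¹ • w‖ with h | h <;>
    rw [projDist, h]
  · exact A.abs_norm_rpow_sub_norm_rpow_le ht hu (norm_neg (‖w‖⁻¹ • w) ▸ hw)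
  · simpa only [map_neg, norm_neg, sub_neg_eq_add] using
      A.abs_norm_rpow_sub_norm_rpow_le ht hu hw

theorem holder_estimate_weights (d : ℕ)
    (A : EuclideanSpace ℝ (Fin d) →L[ℝ] EuclideanSpace ℝ (Fin d))
    (hA : Function.Bijective A) (t : ℝ) (ht : 0 ≤ t)
    (u w : EuclideanSpace ℝ (Fin d)) (hu : u ≠ 0) (hw : w ≠ 0) :
    |‖A (‖u‖⁻¹ • u)‖ ^ t - ‖A (‖w‖⁻¹ • w)‖ ^ t| ≤
      (t + 1) * ‖A‖ ^ t * projDist u w ^ min 1 t :=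
  holder_estimate_weights_general d A t ht u w
end

section
/- In the setting of the previous construction (each Aᵢ K-nonnegative, A = ∑Aᵢ K-irreducible, μ([x₀⋯x_{n−1}]) = ρ(A)^{-n}⟨A_{x₀}⋯A_{x_{n−1}}u, v⟩ with u ∈ int(K), v ∈ int(K*)), there exists C > 0 such that C^{-1}μ([x₀⋯x_{n−1}]) ≤ ρ(A)^{-n}‖A_{x₀}⋯A_{x_{n−1}}‖ ≤ Cμ([x₀⋯x_{n−1}]) for all words; i.e. μ is a 1-Gibbs state for 𝒜 with pressure log ρ(A). -/
open scoped RealInnerProductSpace Pointwise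

/-- The ordered product `A_{x₀} A_{x₁} ⋯ A_{x_{n-1}}`. -/
noncomputable def wprod {M d : ℕ}
    (A : Fin M → (EuclideanSpace ℝ (Fin d) →L[ℝ] EuclideanSpace ℝ (Fin d)))
    {n : ℕ} (x : Fin n → Fin M) :
    EuclideanSpace ℝ (Fin d) →L[ℝ] EuclideanSpace ℝ (Fin d) :=
  (List.ofFn fun i => A (x i)).prod

/-!
Every word product `A_{x₀} ⋯ A_{x_{n-1}}` maps the cone `K` into itself, so the theorem reduces to
a comparison `‖B‖ ≍ ⟪B u, v⟫`, uniform over all operators `B` with `B K ⊆ K`. The upper bound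
on `⟪B u, v⟫` is Cauchy–Schwarz. For the other direction, an interior point `v` of the dual cone
satisfies `c ‖y‖ ≤ ⟪y, v⟫` on `K`, and since `u ± w ∈ K` for small `w`,
`2 c ‖B w‖ ≤ c ‖B (u + w)‖ + c ‖B (u - w)‖ ≤ ⟪B (u + w), v⟫ + ⟪B (u - w), v⟫ = 2 ⟪B u, v⟫`.
-/

open Set Metric

section ConeNonnegative

variable {E F : Type*} [NormedAddCommGroup E] [NormedSpace ℝ E]
  [NormedAddCommGroup F] [InnerProductSpace ℝ F]

lemma exists_pos_mul_norm_le_inner_of_mem_interior_dual {L : Set F} {v : F}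
    (hv : v ∈ interior {w | ∀ x ∈ L, 0 ≤ ⟪x, w⟫}) :
    ∃ c > 0, ∀ y ∈ L, c * ‖y‖ ≤ ⟪y, v⟫ := by
  obtain ⟨c, hc, hball⟩ := nhds_basis_closedBall.mem_iff.mp (mem_interior_iff_mem_nhds.mp hv)
  refine ⟨c, hc, fun y hy => ?_⟩
  rcases eq_or_ne y 0 with rfl | hy0
  · simp
  have hny : 0 < ‖y‖ := norm_pos_iff.mpr hy0
  have hw : v - (c / ‖y‖) • y ∈ closedBall v c := by
    rw [mem_closedBall, dist_eq_norm, sub_sub_cancel_left, norm_neg, norm_smul,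
      Real.norm_of_nonneg (by positivity), div_mul_cancel₀ _ hny.ne']
  have h0 : 0 ≤ ⟪y, v - (c / ‖y‖) • y⟫ := hball hw y hy
  rw [inner_sub_right, real_inner_smul_right, real_inner_self_eq_norm_sq] at h0
  have hcy : c / ‖y‖ * ‖y‖ ^ 2 = c * ‖y‖ := by field_simp
  linarith

variable {K : Set E} {L : Set F} {u : E} {v : F} {c ε : ℝ} {B : E →L[ℝ] F}

lemma mul_norm_apply_le_inner_of_closedBall_subset (hK : closedBall u ε ⊆ K) (hc : 0 ≤ c)
    (hL : ∀ y ∈ L, c * ‖y‖ ≤ ⟪y, v⟫) (hB : MapsTo B K L) {w : E} (hw : ‖w‖ ≤ ε) :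
    c * ‖B w‖ ≤ ⟪B u, v⟫ := by
  have hplus : u + w ∈ K := hK (by simpa [dist_eq_norm] using hw)
  have hminus : u - w ∈ K := hK (by simpa [dist_eq_norm] using hw)
  have htwice : B (u + w) - B (u - w) = (2 : ℝ) • B w := by
    rw [map_add, map_sub, two_smul]; abel
  have hnorm : 2 * ‖B w‖ ≤ ‖B (u + w)‖ + ‖B (u - w)‖ := by
    calc 2 * ‖B w‖ = ‖B (u + w) - B (u - w)‖ := by rw [htwice, norm_smul, Real.norm_two]
      _ ≤ ‖B (u + w)‖ + ‖B (u - w)‖ := norm_sub_le _ _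
  have hsum : ⟪B (u + w), v⟫ + ⟪B (u - w), v⟫ = 2 * ⟪B u, v⟫ := by
    rw [map_add, map_sub, inner_add_left, inner_sub_left]; ring
  linarith [hL _ (hB hplus), hL _ (hB hminus), mul_le_mul_of_nonneg_left hnorm hc]

lemma opNorm_le_inner_of_closedBall_subset (hε : 0 < ε) (hK : closedBall u ε ⊆ K) (hc : 0 < c)
    (hL : ∀ y ∈ L, c * ‖y‖ ≤ ⟪y, v⟫) (hB : MapsTo B K L) :
    ‖B‖ ≤ (c * ε)⁻¹ * ⟪B u, v⟫ := by
  have hpos : 0 ≤ ⟪B u, v⟫ := by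
    simpa using
      mul_norm_apply_le_inner_of_closedBall_subset hK hc.le hL hB (w := 0) (by simpa using hε.le)
  refine B.opNorm_le_of_unit_norm (mul_nonneg (by positivity) hpos) fun x hx => ?_
  have hεx := mul_norm_apply_le_inner_of_closedBall_subset hK hc.le hL hB (w := ε • x)
    (by rw [norm_smul, hx, Real.norm_of_nonneg hε.le, mul_one])
  rw [map_smul, norm_smul, Real.norm_of_nonneg hε.le] at hεx
  rw [mul_inv, mul_assoc, le_inv_mul_iff₀ hc, le_inv_mul_iff₀ hε]
  linarith

theorem exists_inv_mul_inner_le_opNorm_and_opNorm_le_mul_inner (hu : u ∈ interior K)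
    (hv : v ∈ interior {w | ∀ x ∈ L, 0 ≤ ⟪x, w⟫}) :
    ∃ C > 0, ∀ B : E →L[ℝ] F, MapsTo B K L → C⁻¹ * ⟪B u, v⟫ ≤ ‖B‖ ∧ ‖B‖ ≤ C * ⟪B u, v⟫ := by
  obtain ⟨ε, hε, hK⟩ := nhds_basis_closedBall.mem_iff.mp (mem_interior_iff_mem_nhds.mp hu)
  obtain ⟨c, hc, hL⟩ := exists_pos_mul_norm_le_inner_of_mem_interior_dual hv
  set C := max (‖u‖ * ‖v‖) (c * ε)⁻¹
  have hC : 0 < C := lt_max_of_lt_right (by positivity)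
  refine ⟨C, hC, fun B hB => ⟨?_, ?_⟩⟩
  · rw [inv_mul_le_iff₀ hC]
    calc ⟪B u, v⟫ ≤ ‖B u‖ * ‖v‖ := real_inner_le_norm _ _
      _ ≤ ‖B‖ * ‖u‖ * ‖v‖ := by gcongr; exact B.le_opNorm u
      _ = ‖u‖ * ‖v‖ * ‖B‖ := by ring
      _ ≤ C * ‖B‖ := by gcongr; exact le_max_left _ _
  · have hpos : 0 ≤ ⟪B u, v⟫ := le_trans (by positivity) (hL _ (hB (interior_subset hu)))
    calc ‖B‖ ≤ (c * ε)⁻¹ * ⟪B u, v⟫ := opNorm_le_inner_of_closedBall_subset hε hK hc hL hB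
      _ ≤ C * ⟪B u, v⟫ := by gcongr; exact le_max_right _ _

end ConeNonnegative

lemma wprod_mapsTo {M d : ℕ} {K : Set (EuclideanSpace ℝ (Fin d))}
    {A : Fin M → (EuclideanSpace ℝ (Fin d) →L[ℝ] EuclideanSpace ℝ (Fin d))}
    (hA : ∀ i, MapsTo (A i) K K) {n : ℕ} (x : Fin n → Fin M) :
    MapsTo (wprod A x) K K :=
  List.prod_induction (fun B : _ →L[ℝ] _ => MapsTo B K K) (fun _ _ hB hB' => hB.comp hB')
    (mapsTo_id K) (by simpa using fun i => hA (x i))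

theorem cylinder_measure_gibbs_inequality_general {M d : ℕ}
    (K : Set (EuclideanSpace ℝ (Fin d)))
    (A : Fin M → (EuclideanSpace ℝ (Fin d) →L[ℝ] EuclideanSpace ℝ (Fin d)))
    (hA : ∀ i, ∀ x ∈ K, A i x ∈ K)
    (r : ℝ) (hr : 0 < r)
    (u v : EuclideanSpace ℝ (Fin d))
    (huK : u ∈ interior K)
    (hvK : v ∈ interior {w | ∀ x ∈ K, 0 ≤ ⟪x, w⟫}) :
    ∃ C > (0 : ℝ), ∀ (n : ℕ) (x : Fin n → Fin M),
      C⁻¹ * ((r ^ n)⁻¹ * ⟪(wprod A x) u, v⟫) ≤ (r ^ n)⁻¹ * ‖wprod A x‖ ∧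
      (r ^ n)⁻¹ * ‖wprod A x‖ ≤ C * ((r ^ n)⁻¹ * ⟪(wprod A x) u, v⟫) := by
  obtain ⟨C, hC, hbound⟩ := exists_inv_mul_inner_le_opNorm_and_opNorm_le_mul_inner huK hvK
  refine ⟨C, hC, fun n x => ?_⟩
  obtain ⟨hlower, hupper⟩ := hbound (wprod A x) (wprod_mapsTo (fun i y hy => hA i y hy) x)
  have hscale : 0 ≤ (r ^ n)⁻¹ := by positivity
  rw [mul_left_comm C⁻¹, mul_left_comm C]
  exact ⟨mul_le_mul_of_nonneg_left hlower hscale, mul_le_mul_of_nonneg_left hupper hscale⟩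

theorem cylinder_measure_gibbs_inequality {M d : ℕ}
    (K : Set (EuclideanSpace ℝ (Fin d)))
    (hclosed : IsClosed K) (hpointed : K ∩ (-K) = {0})
    (hsmulK : ∀ l : ℝ, 0 < l → l • K = K) (hconv : Convex ℝ K)
    (hint : (interior K).Nonempty)
    (A : Fin M → (EuclideanSpace ℝ (Fin d) →L[ℝ] EuclideanSpace ℝ (Fin d)))
    (hA : ∀ i, ∀ x ∈ K, A i x ∈ K)
    (hirr : ∀ x ∈ K, x ≠ 0 →
      (∑ k ∈ Finset.range d, (∑ i, A i) ^ k) x ∈ interior K)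
    (r : ℝ) (hr : 0 < r)
    (hrspec : spectralRadius ℝ (∑ i, A i) = ENNReal.ofReal r)
    (u v : EuclideanSpace ℝ (Fin d))
    (hu : (∑ i, A i) u = r • u)
    (hv : ContinuousLinearMap.adjoint (∑ i, A i) v = r • v)
    (huv : ⟪u, v⟫ = 1) (huK : u ∈ interior K)
    (hvK : v ∈ interior {w | ∀ x ∈ K, 0 ≤ ⟪x, w⟫}) :
    ∃ C > (0 : ℝ), ∀ (n : ℕ) (x : Fin n → Fin M),
      C⁻¹ * ((r ^ n)⁻¹ * ⟪(wprod A x) u, v⟫) ≤ (r ^ n)⁻¹ * ‖wprod A x‖ ∧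
      (r ^ n)⁻¹ * ‖wprod A x‖ ≤ C * ((r ^ n)⁻¹ * ⟪(wprod A x) u, v⟫) :=
  cylinder_measure_gibbs_inequality_general K A hA r hr u v huK hvK
end

section
/- Suppose each Aᵢ preserves a closed cone K with nonempty interior and A = ∑ᵢAᵢ is K-primitive, so that ‖ρ(A)^{-n}Aⁿ − uvᵀ‖ ≤ Cβⁿ for some β ∈ (0,1), where u, v are the normalized right/left Perron eigenvectors. Then for the measure μ([x₀⋯x_{n−1}]) = ρ(A)^{-n}⟨A_{x₀}⋯A_{x_{n−1}}u, v⟩ there is a constant K′ such that ∑_{I,J} |μ([I] ∩ σ^{-t}[{}_t J])−μ([I])μ([J])| ≤ K′β^{t−s} for all s ≤ t, where the sum is over all words I of length s and J of any fixed length r, and [{}_t J] denotes the cylinder fixing coordinates t,…,t+r−1 to spell J. In particular μ is weak Bernoulli. -/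
/-!
Summing over the middle words `w` of length `m = t - s` turns the correlation defect into
`ρ^{-(s+r)} ⟪A_I (ρ^{-m} Aᵐ - u vᵀ) A_J u, v⟫`, which is at most
`ρ^{-s}‖A_I‖ · ρ^{-r}‖A_J‖ · Cβᵐ ‖u‖‖v‖`. Because `u` is interior to `K` and `v` interior to the
dual cone, every `B` preserving `K` has `‖B‖ ≤ c ⟪B u, v⟫`; with `∑_{|I|=n} A_I = Aⁿ` and
`Aⁿ u = ρⁿ u` this gives `∑_{|I|=n} ρ^{-n}‖A_I‖ ≤ c`, so the double sum is at most `c² C ‖u‖‖v‖ βᵐ`.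
-/

open scoped RealInnerProductSpace Pointwise

/-- The value `μ([x₀⋯x_{n-1}]) = ρ(A)^{-n} ⟨A_{x₀}⋯A_{x_{n-1}} u, v⟩` of the
matrix Gibbs state on a cylinder. -/
noncomputable def cylMeas {M d : ℕ}
    (A : Fin M → (EuclideanSpace ℝ (Fin d) →L[ℝ] EuclideanSpace ℝ (Fin d)))
    (r : ℝ) (u v : EuclideanSpace ℝ (Fin d)) {n : ℕ} (x : Fin n → Fin M) : ℝ :=
  (r ^ n)⁻¹ * ⟪(wprod A x) u, v⟫

section Cone

variable {E : Type*} [NormedAddCommGroup E] [InnerProductSpace ℝ E] {K : Set E} {u v : E}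

lemma exists_mul_norm_le_inner_of_mem_interior_dual
    (hv : v ∈ interior {w | ∀ x ∈ K, 0 ≤ ⟪x, w⟫}) :
    ∃ ε > 0, ∀ x ∈ K, ε * ‖x‖ ≤ ⟪x, v⟫ := by
  obtain ⟨ε, hε, hball⟩ := Metric.nhds_basis_closedBall.mem_iff.1 (mem_interior_iff_mem_nhds.1 hv)
  refine ⟨ε, hε, fun x hx => ?_⟩
  rcases eq_or_ne x 0 with rfl | hx0
  · simp
  have hxn : 0 < ‖x‖ := norm_pos_iff.2 hx0
  have hmem : v - (ε / ‖x‖) • x ∈ Metric.closedBall v ε := by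
    rw [Metric.mem_closedBall, dist_eq_norm, sub_sub_cancel_left, norm_neg, norm_smul,
      Real.norm_of_nonneg (by positivity), div_mul_cancel₀ _ hxn.ne']
  have := hball hmem x hx
  rw [inner_sub_right, real_inner_smul_right, real_inner_self_eq_norm_sq] at this
  have h : ε / ‖x‖ * ‖x‖ ^ 2 = ε * ‖x‖ := by field_simp
  linarith

lemma exists_opNorm_le_inner_of_mapsTo (hu : u ∈ interior K)
    (hv : v ∈ interior {w | ∀ x ∈ K, 0 ≤ ⟪x, w⟫}) :
    ∃ c > 0, ∀ B : E →L[ℝ] E, Set.MapsTo B K K → ‖B‖ ≤ c * ⟪B u, v⟫ := by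
  obtain ⟨ε, hε, hεv⟩ := exists_mul_norm_le_inner_of_mem_interior_dual hv
  obtain ⟨δ, hδ, hball⟩ := Metric.nhds_basis_closedBall.mem_iff.1 (mem_interior_iff_mem_nhds.1 hu)
  refine ⟨(δ * ε)⁻¹, by positivity, fun B hB => ?_⟩
  have hBu : ε * ‖B u‖ ≤ ⟪B u, v⟫ := hεv _ (hB (interior_subset hu))
  refine ContinuousLinearMap.opNorm_le_of_unit_norm
    (mul_nonneg (by positivity) ((by positivity : 0 ≤ ε * ‖B u‖).trans hBu)) fun x hx => ?_
  have hmem : ∀ y : E, ‖y‖ = 1 → ε * ‖B (u + δ • y)‖ ≤ ⟪B u, v⟫ + δ * ⟪B y, v⟫ := fun y hy => by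
    have : u + δ • y ∈ Metric.closedBall u δ := by
      rw [Metric.mem_closedBall, dist_eq_norm, add_sub_cancel_left, norm_smul, hy,
        Real.norm_of_nonneg hδ.le, mul_one]
    simpa [inner_add_left, real_inner_smul_left] using hεv _ (hB (hball this))
  -- Test `B` at `u ± δ x ∈ K`: the `δ ⟪B x, v⟫` terms cancel in the sum of the two bounds.
  have hplus := hmem x hx
  have hminus := hmem (-x) (by rw [norm_neg, hx])
  have hdiff : (2 * δ) • B x = B (u + δ • x) - B (u + δ • -x) := by
    simp only [map_add, map_smul, map_neg]; module
  have h2 : 2 * δ * ‖B x‖ ≤ ‖B (u + δ • x)‖ + ‖B (u + δ • -x)‖ := by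
    rw [← Real.norm_of_nonneg (by positivity : 0 ≤ 2 * δ), ← norm_smul, hdiff]
    exact norm_sub_le _ _
  simp only [map_neg, inner_neg_left] at hminus
  rw [mul_inv, mul_assoc, le_inv_mul_iff₀ hδ, le_inv_mul_iff₀ hε]
  nlinarith

end Cone

section Words

variable {M d : ℕ} (A : Fin M → (EuclideanSpace ℝ (Fin d) →L[ℝ] EuclideanSpace ℝ (Fin d)))

lemma wprod_cons {n : ℕ} (a : Fin M) (x : Fin n → Fin M) :
    wprod A (Fin.cons a x) = A a * wprod A x := by
  simp [wprod, List.ofFn_succ]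

lemma wprod_append {m n : ℕ} (x : Fin m → Fin M) (y : Fin n → Fin M) :
    wprod A (Fin.append x y) = wprod A x * wprod A y := by
  simp only [wprod, ← List.prod_append, ← List.ofFn_fin_append]
  congr 2
  funext i
  refine Fin.addCases (fun i => ?_) (fun i => ?_) i <;> simp

lemma sum_wprod_eq_pow (n : ℕ) : ∑ x : Fin n → Fin M, wprod A x = (∑ i, A i) ^ n := by
  induction n with
  | zero => simp [wprod]
  | succ n ih =>
    rw [pow_succ', ← ih, Finset.sum_mul_sum, ← (Fin.consEquiv fun _ => Fin M).sum_comp,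
      Fintype.sum_prod_type]
    exact Finset.sum_congr rfl fun a _ => Finset.sum_congr rfl fun x _ => wprod_cons A a x

lemma mapsTo_wprod {K : Set (EuclideanSpace ℝ (Fin d))} (hA : ∀ i, Set.MapsTo (A i) K K) :
    ∀ {n : ℕ} (x : Fin n → Fin M), Set.MapsTo (wprod A x) K K
  | 0, _ => by simpa [wprod] using Set.mapsTo_id K
  | _ + 1, x => by
    rw [← Fin.cons_self_tail x, wprod_cons]
    exact (hA _).comp (mapsTo_wprod hA _)

end Words

lemma pow_apply_of_apply_eq_smul {E : Type*} [NormedAddCommGroup E] [NormedSpace ℝ E]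
    {S : E →L[ℝ] E} {r : ℝ} {u : E} (hu : S u = r • u) (n : ℕ) : (S ^ n) u = r ^ n • u := by
  induction n with
  | zero => simp
  | succ n ih => rw [pow_succ, mul_apply_eq_comp, hu, map_smul, ih, smul_smul, pow_succ']

section GibbsState

variable {M d : ℕ} {A : Fin M → (EuclideanSpace ℝ (Fin d) →L[ℝ] EuclideanSpace ℝ (Fin d))}
  {r : ℝ} {u v : EuclideanSpace ℝ (Fin d)}

lemma sum_inv_pow_mul_norm_wprod_le {K : Set (EuclideanSpace ℝ (Fin d))} {c : ℝ}
    (hc : ∀ B : EuclideanSpace ℝ (Fin d) →L[ℝ] EuclideanSpace ℝ (Fin d),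
      Set.MapsTo B K K → ‖B‖ ≤ c * ⟪B u, v⟫)
    (hA : ∀ i, Set.MapsTo (A i) K K) (hr : 0 < r) (hu : (∑ i, A i) u = r • u)
    (huv : ⟪u, v⟫ = 1) (n : ℕ) :
    ∑ x : Fin n → Fin M, (r ^ n)⁻¹ * ‖wprod A x‖ ≤ c := by
  have hsum : ∑ x : Fin n → Fin M, ‖wprod A x‖ ≤ c * r ^ n :=
    calc ∑ x : Fin n → Fin M, ‖wprod A x‖
        ≤ ∑ x : Fin n → Fin M, c * ⟪wprod A x u, v⟫ :=
          Finset.sum_le_sum fun x _ => hc _ (mapsTo_wprod A hA x)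
      _ = c * ⟪((∑ i, A i) ^ n) u, v⟫ := by
          rw [← Finset.mul_sum, ← sum_wprod_eq_pow, sum_apply, sum_inner]
      _ = c * r ^ n := by
          rw [pow_apply_of_apply_eq_smul hu, real_inner_smul_left, huv, mul_one]
  rw [← Finset.mul_sum, inv_mul_le_iff₀ (pow_pos hr n), mul_comm]
  exact hsum

lemma sum_cylMeas_append_sub_mul_eq
    {Pm : EuclideanSpace ℝ (Fin d) →L[ℝ] EuclideanSpace ℝ (Fin d)}
    (hPm : ∀ x, Pm x = ⟪v, x⟫ • u) {s l : ℕ} (m : ℕ) (I : Fin s → Fin M) (J : Fin l → Fin M) :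
    (∑ w : Fin m → Fin M, cylMeas A r u v (Fin.append (Fin.append I w) J)) -
        cylMeas A r u v I * cylMeas A r u v J =
      (r ^ s)⁻¹ * (r ^ l)⁻¹ *
        ⟪wprod A I (((r ^ m)⁻¹ • (∑ i, A i) ^ m - Pm) (wprod A J u)), v⟫ := by
  have hmid : ∑ w : Fin m → Fin M, ⟪wprod A (Fin.append (Fin.append I w) J) u, v⟫ =
      ⟪wprod A I (((∑ i, A i) ^ m) (wprod A J u)), v⟫ := by
    simp only [wprod_append, mul_apply_eq_comp, ← sum_inner, ← map_sum,
      ← sum_wprod_eq_pow, sum_apply]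
  simp only [cylMeas, ← Finset.mul_sum, hmid]
  rw [sub_apply, smul_apply, hPm, map_sub, map_smul, map_smul, inner_sub_left,
    real_inner_smul_left, real_inner_smul_left, real_inner_comm (wprod A J u) v, pow_add, pow_add,
    mul_inv, mul_inv]
  ring

lemma abs_sum_cylMeas_append_sub_mul_le
    {Pm : EuclideanSpace ℝ (Fin d) →L[ℝ] EuclideanSpace ℝ (Fin d)} (hr : 0 ≤ r)
    (hPm : ∀ x, Pm x = ⟪v, x⟫ • u) {s l : ℕ} (m : ℕ) (I : Fin s → Fin M) (J : Fin l → Fin M) :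
    |(∑ w : Fin m → Fin M, cylMeas A r u v (Fin.append (Fin.append I w) J)) -
        cylMeas A r u v I * cylMeas A r u v J| ≤
      (r ^ s)⁻¹ * ‖wprod A I‖ * ((r ^ l)⁻¹ * ‖wprod A J‖) *
        (‖(r ^ m)⁻¹ • (∑ i, A i) ^ m - Pm‖ * ‖u‖ * ‖v‖) := by
  set D := (r ^ m)⁻¹ • (∑ i, A i) ^ m - Pm
  have hinner :
      |⟪wprod A I (D (wprod A J u)), v⟫| ≤ ‖wprod A I‖ * (‖D‖ * (‖wprod A J‖ * ‖u‖)) * ‖v‖ :=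
    calc |⟪wprod A I (D (wprod A J u)), v⟫| ≤ ‖wprod A I (D (wprod A J u))‖ * ‖v‖ :=
          abs_real_inner_le_norm _ _
      _ ≤ ‖wprod A I‖ * (‖D‖ * (‖wprod A J‖ * ‖u‖)) * ‖v‖ := by
          gcongr
          exact (wprod A I).le_opNorm_of_le (D.le_opNorm_of_le ((wprod A J).le_opNorm u))
  rw [sum_cylMeas_append_sub_mul_eq hPm, abs_mul, abs_mul, abs_of_nonneg (by positivity),
    abs_of_nonneg (by positivity : 0 ≤ (r ^ l)⁻¹)]
  calc _ ≤ (r ^ s)⁻¹ * (r ^ l)⁻¹ * (‖wprod A I‖ * (‖D‖ * (‖wprod A J‖ * ‖u‖)) * ‖v‖) := by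
        gcongr
    _ = _ := by ring

lemma sum_abs_sum_cylMeas_append_sub_mul_le {K : Set (EuclideanSpace ℝ (Fin d))} {c : ℝ}
    {Pm : EuclideanSpace ℝ (Fin d) →L[ℝ] EuclideanSpace ℝ (Fin d)}
    (hc : ∀ B : EuclideanSpace ℝ (Fin d) →L[ℝ] EuclideanSpace ℝ (Fin d),
      Set.MapsTo B K K → ‖B‖ ≤ c * ⟪B u, v⟫)
    (hA : ∀ i, Set.MapsTo (A i) K K) (hr : 0 < r) (hu : (∑ i, A i) u = r • u)
    (huv : ⟪u, v⟫ = 1) (hPm : ∀ x, Pm x = ⟪v, x⟫ • u) (s l m : ℕ) :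
    ∑ I : Fin s → Fin M, ∑ J : Fin l → Fin M,
        |(∑ w : Fin m → Fin M, cylMeas A r u v (Fin.append (Fin.append I w) J)) -
          cylMeas A r u v I * cylMeas A r u v J| ≤
      c * c * (‖(r ^ m)⁻¹ • (∑ i, A i) ^ m - Pm‖ * ‖u‖ * ‖v‖) := by
  have hgibbs := sum_inv_pow_mul_norm_wprod_le hc hA hr hu huv
  calc _ ≤ ∑ I : Fin s → Fin M, ∑ J : Fin l → Fin M,
          (r ^ s)⁻¹ * ‖wprod A I‖ * ((r ^ l)⁻¹ * ‖wprod A J‖) *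
            (‖(r ^ m)⁻¹ • (∑ i, A i) ^ m - Pm‖ * ‖u‖ * ‖v‖) := by
        gcongr with I _ J _
        exact abs_sum_cylMeas_append_sub_mul_le hr.le hPm m I J
    _ = (∑ I : Fin s → Fin M, (r ^ s)⁻¹ * ‖wprod A I‖) *
          (∑ J : Fin l → Fin M, (r ^ l)⁻¹ * ‖wprod A J‖) *
            (‖(r ^ m)⁻¹ • (∑ i, A i) ^ m - Pm‖ * ‖u‖ * ‖v‖) := by
        rw [Finset.sum_mul_sum, Finset.sum_mul]
        simp only [Finset.sum_mul]
    _ ≤ c * c * (‖(r ^ m)⁻¹ • (∑ i, A i) ^ m - Pm‖ * ‖u‖ * ‖v‖) := by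
        gcongr
        · exact (Finset.sum_nonneg fun J _ => by positivity).trans (hgibbs l)
        · exact hgibbs s
        · exact hgibbs l

end GibbsState

theorem primitive_weak_bernoulli_sum_bound_general {M d : ℕ}
    (K : Set (EuclideanSpace ℝ (Fin d)))
    (A : Fin M → (EuclideanSpace ℝ (Fin d) →L[ℝ] EuclideanSpace ℝ (Fin d)))
    (hA : ∀ i, ∀ x ∈ K, A i x ∈ K)
    (r : ℝ) (hr : 0 < r)
    (u v : EuclideanSpace ℝ (Fin d))
    (hu : (∑ i, A i) u = r • u)
    (huv : ⟪u, v⟫ = 1) (huK : u ∈ interior K)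
    (hvK : v ∈ interior {w | ∀ x ∈ K, 0 ≤ ⟪x, w⟫})
    (Pm : EuclideanSpace ℝ (Fin d) →L[ℝ] EuclideanSpace ℝ (Fin d))
    (hPm : ∀ x, Pm x = ⟪v, x⟫ • u)
    (C β : ℝ) (hC : 0 < C)
    (hconvg : ∀ n : ℕ, ‖(r ^ n)⁻¹ • (∑ i, A i) ^ n - Pm‖ ≤ C * β ^ n) :
    ∃ K' > (0 : ℝ), ∀ (s rl t : ℕ), s ≤ t →
      (∑ I : Fin s → Fin M, ∑ J : Fin rl → Fin M,
        |(∑ Kw : Fin (t - s) → Fin M,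
            cylMeas A r u v (Fin.append (Fin.append I Kw) J)) -
          cylMeas A r u v I * cylMeas A r u v J|) ≤ K' * β ^ (t - s) := by
  obtain ⟨c, hc, hcone⟩ := exists_opNorm_le_inner_of_mapsTo huK hvK
  have hu0 : 0 < ‖u‖ := norm_pos_iff.2 (by rintro rfl; simp at huv)
  have hv0 : 0 < ‖v‖ := norm_pos_iff.2 (by rintro rfl; simp at huv)
  refine ⟨c * c * (C * ‖u‖ * ‖v‖), by positivity, fun s rl t _ => ?_⟩
  calc _ ≤ c * c * (‖(r ^ (t - s))⁻¹ • (∑ i, A i) ^ (t - s) - Pm‖ * ‖u‖ * ‖v‖) :=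
        sum_abs_sum_cylMeas_append_sub_mul_le hcone hA hr hu huv hPm s rl (t - s)
    _ ≤ c * c * (C * β ^ (t - s) * ‖u‖ * ‖v‖) := by gcongr; exact hconvg _
    _ = c * c * (C * ‖u‖ * ‖v‖) * β ^ (t - s) := by ring

theorem primitive_weak_bernoulli_sum_bound {M d : ℕ}
    (K : Set (EuclideanSpace ℝ (Fin d)))
    (hclosed : IsClosed K) (hpointed : K ∩ (-K) = {0})
    (hsmulK : ∀ l : ℝ, 0 < l → l • K = K) (hconv : Convex ℝ K)
    (hint : (interior K).Nonempty)
    (A : Fin M → (EuclideanSpace ℝ (Fin d) →L[ℝ] EuclideanSpace ℝ (Fin d)))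
    (hA : ∀ i, ∀ x ∈ K, A i x ∈ K)
    (r : ℝ) (hr : 0 < r)
    (hrspec : spectralRadius ℝ (∑ i, A i) = ENNReal.ofReal r)
    (u v : EuclideanSpace ℝ (Fin d))
    (hu : (∑ i, A i) u = r • u)
    (hv : ContinuousLinearMap.adjoint (∑ i, A i) v = r • v)
    (huv : ⟪u, v⟫ = 1) (huK : u ∈ interior K)
    (hvK : v ∈ interior {w | ∀ x ∈ K, 0 ≤ ⟪x, w⟫})
    (Pm : EuclideanSpace ℝ (Fin d) →L[ℝ] EuclideanSpace ℝ (Fin d))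
    (hPm : ∀ x, Pm x = ⟪v, x⟫ • u)
    (C β : ℝ) (hC : 0 < C) (hβ0 : 0 < β) (hβ1 : β < 1)
    (hconvg : ∀ n : ℕ, ‖(r ^ n)⁻¹ • (∑ i, A i) ^ n - Pm‖ ≤ C * β ^ n) :
    ∃ K' > (0 : ℝ), ∀ (s rl t : ℕ), s ≤ t →
      (∑ I : Fin s → Fin M, ∑ J : Fin rl → Fin M,
        |(∑ Kw : Fin (t - s) → Fin M,
            cylMeas A r u v (Fin.append (Fin.append I Kw) J)) -
          cylMeas A r u v I * cylMeas A r u v J|) ≤ K' * β ^ (t - s) :=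
  primitive_weak_bernoulli_sum_bound_general K A hA r hr u v hu huv huK hvK Pm hPm C β hC hconvg
end
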